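/- arXiv:1707.04922 — 7 statements merged into one kernel-verified Lean document; each statement's English description precedes it below -/
import Mathlib

section
/- Let Π ⊂ ℝ^n be a k-dimensional linear subspace and ν_1, ..., ν_k ∈ Π nonzero vectors such that for each i = 1, ..., k-1, the angle between the line x^i = span{ν_i} and the orthogonal complement (within ℝ^n) of span{ν_{i+1}, ..., ν_k} is at most ζ, for some ζ ∈ (0, π/2). Then there is a constant C = C_k(ζ) > 0 depending only on k and ζ such that for every A ∈ ℝ^n, |p_Π(A)| ≤ C·Σ_{i=1}^k |p_{x^i}(A)|, where p_Π and p_{x^i} denote orthogonal projections onto Π and onto the lines x^i respectively. -/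
open InnerProductGeometry

/-- The angle between the line spanned by a vector `v` and a linear subspace `W`
of `ℝⁿ`: the infimum of the angles between `v` and nonzero vectors of `W`. -/
noncomputable def lineSubspaceAngle {n : ℕ} (v : EuclideanSpace ℝ (Fin n))
    (W : Submodule ℝ (EuclideanSpace ℝ (Fin n))) : ℝ :=
  sInf {θ : ℝ | ∃ w ∈ W, w ≠ 0 ∧ θ = InnerProductGeometry.angle v w}

/-!
Induction on `k`, adding `ν 0` to `W = span {ν 1, …, ν (k-1)}`. The angle hypothesis says that the
component `u` of `ν 0` orthogonal to `W` has `‖u‖ ≥ cos ζ ‖ν 0‖`. Since `span {ν 0} ⊔ W` is the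
orthogonal sum `span {u} ⊔ W`, its projection is `p_u + p_W`, and
`‖p_u A‖ = |⟪u, A⟫| / ‖u‖ ≤ (|⟪ν 0, A⟫| + |⟪ν 0, p_W A⟫|) / (cos ζ ‖ν 0‖)`
`        ≤ (‖p_{ν 0} A‖ + ‖p_W A‖) / cos ζ`.
This gives `C_k = (1 + 2 / cos ζ) ^ k`. The same hypothesis gives `ν 0 ∉ W`, so the `ν i` are
linearly independent and span `Π` by counting dimensions.
-/

open Set Submodule Filter Topology
open scoped RealInnerProductSpace

theorem Fin.image_Ioi_zero {α : Type*} {k : ℕ} (ν : Fin (k + 1) → α) :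
    ν '' Ioi 0 = range (Fin.tail ν) := by
  ext
  simp [Fin.exists_fin_succ, Fin.tail, Fin.succ_pos]

theorem Fin.image_Ioi_succ {α : Type*} {k : ℕ} (ν : Fin (k + 1) → α) (i : Fin k) :
    ν '' Ioi i.succ = Fin.tail ν '' Ioi i := by
  rw [← Fin.image_succ_Ioi, image_image]
  rfl

theorem linearIndependent_of_notMem_span_image_Ioi {K V : Type*} [DivisionRing K] [AddCommGroup V]
    [Module K V] {k : ℕ} {ν : Fin k → V} (h : ∀ i, ν i ∉ span K (ν '' Ioi i)) :
    LinearIndependent K ν := by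
  induction k with
  | zero => exact linearIndependent_empty_type
  | succ k ih =>
    refine linearIndependent_finSucc.mpr ⟨ih fun i => ?_, Fin.image_Ioi_zero ν ▸ h 0⟩
    have := h i.succ
    rwa [Fin.image_Ioi_succ] at this

section Projection

variable {E : Type*} [NormedAddCommGroup E] [InnerProductSpace ℝ E]

theorem Submodule.IsOrtho.starProjection_sup_apply {U V : Submodule ℝ E}
    [U.HasOrthogonalProjection] [V.HasOrthogonalProjection] [(U ⊔ V).HasOrthogonalProjection]
    (h : U ⟂ V) (A : E) :
    (U ⊔ V).starProjection A = U.starProjection A + V.starProjection A := by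
  apply eq_starProjection_of_mem_of_inner_eq_zero
  · exact add_mem (mem_sup_left (starProjection_apply_mem U A))
      (mem_sup_right (starProjection_apply_mem V A))
  · intro w hw
    obtain ⟨u, hu, v, hv, rfl⟩ := mem_sup.mp hw
    have hUv : ⟪U.starProjection A, v⟫ = 0 := h.inner_eq (starProjection_apply_mem U A) hv
    have hVu : ⟪V.starProjection A, u⟫ = 0 := h.symm.inner_eq (starProjection_apply_mem V A) hu
    have hU : ⟪A - U.starProjection A, u⟫ = 0 := starProjection_inner_eq_zero A u hu
    have hV : ⟪A - V.starProjection A, v⟫ = 0 := starProjection_inner_eq_zero A v hv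
    simp only [inner_sub_left, inner_add_left, inner_add_right] at *
    linarith

theorem norm_mul_norm_starProjection_span_singleton (u A : E) :
    ‖u‖ * ‖(ℝ ∙ u).starProjection A‖ = |⟪u, A⟫| := by
  rcases eq_or_ne u 0 with rfl | hu
  · simp
  have : 0 < ‖u‖ := norm_pos_iff.mpr hu
  rw [starProjection_singleton, RCLike.ofReal_real_eq_id, id, norm_smul, Real.norm_eq_abs, abs_div,
    abs_of_pos (by positivity : 0 < ‖u‖ ^ 2)]
  field_simp

theorem cos_angle_mul_norm_le_norm_starProjection (K : Submodule ℝ E) [K.HasOrthogonalProjection]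
    (v : E) {w : E} (hw : w ∈ K) : Real.cos (angle v w) * ‖v‖ ≤ ‖K.starProjection v‖ := by
  rcases eq_or_ne w 0 with rfl | hw0
  · simp
  have hw_pos : 0 < ‖w‖ := norm_pos_iff.mpr hw0
  have hinner : ⟪v, w⟫ = ⟪K.starProjection v, w⟫ := by
    rw [inner_starProjection_left_eq_right, starProjection_eq_self_iff.mpr hw]
  refine le_of_mul_le_mul_right ?_ hw_pos
  calc Real.cos (angle v w) * ‖v‖ * ‖w‖ = ⟪K.starProjection v, w⟫ := by
        rw [mul_assoc, cos_angle_mul_norm_mul_norm, hinner]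
    _ ≤ ‖K.starProjection v‖ * ‖w‖ := real_inner_le_norm _ _

theorem norm_starProjection_sup_le {c : ℝ} (hc : 0 < c) {v : E} {K : Submodule ℝ E}
    [FiniteDimensional ℝ K] (hv : c * ‖v‖ ≤ ‖Kᗮ.starProjection v‖) (A : E) :
    ‖((ℝ ∙ v) ⊔ K).starProjection A‖ ≤
      (1 + 1 / c) * ‖K.starProjection A‖ + 1 / c * ‖(ℝ ∙ v).starProjection A‖ := by
  rcases eq_or_ne v 0 with rfl | hv0
  · simpa using le_mul_of_one_le_left (norm_nonneg (K.starProjection A))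
      (by simp [hc.le] : (1 : ℝ) ≤ 1 + 1 / c)
  set u := Kᗮ.starProjection v with hu_def
  have hvu : v - u ∈ K := by
    rw [hu_def, starProjection_orthogonal_val, sub_sub_cancel]; exact starProjection_apply_mem K v
  have hspan : (ℝ ∙ v) ⊔ K = (ℝ ∙ u) ⊔ K := by
    have hle : ∀ x y : E, x - y ∈ K → (ℝ ∙ x) ⊔ K ≤ (ℝ ∙ y) ⊔ K := fun x y h =>
      sup_le ((span_singleton_le_iff_mem _ _).mpr (by
        simpa using add_mem (mem_sup_left (mem_span_singleton_self y)) (mem_sup_right h)))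
        le_sup_right
    exact le_antisymm (hle v u hvu) (hle u v (by simpa using neg_mem hvu))
  have hortho : (ℝ ∙ u) ⟂ K :=
    isOrtho_iff_le.mpr ((span_singleton_le_iff_mem u _).mpr (starProjection_apply_mem Kᗮ v))
  have hinner : ⟪u, A⟫ = ⟪v, A⟫ - ⟪v, K.starProjection A⟫ := by
    rw [hu_def, starProjection_orthogonal_val, inner_sub_left, inner_starProjection_left_eq_right]
  have hbound : ‖u‖ * ‖(ℝ ∙ u).starProjection A‖ ≤
      ‖v‖ * (‖(ℝ ∙ v).starProjection A‖ + ‖K.starProjection A‖) := by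
    rw [norm_mul_norm_starProjection_span_singleton, hinner, mul_add,
      norm_mul_norm_starProjection_span_singleton]
    refine (abs_sub _ _).trans ?_
    gcongr
    exact abs_real_inner_le_norm _ _
  have hu : c * ‖(ℝ ∙ u).starProjection A‖ ≤
      ‖(ℝ ∙ v).starProjection A‖ + ‖K.starProjection A‖ := by
    have : 0 < ‖v‖ := norm_pos_iff.mpr hv0
    refine le_of_mul_le_mul_left ?_ this
    calc ‖v‖ * (c * ‖(ℝ ∙ u).starProjection A‖) = c * ‖v‖ * ‖(ℝ ∙ u).starProjection A‖ := by ring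
      _ ≤ ‖u‖ * ‖(ℝ ∙ u).starProjection A‖ := by gcongr
      _ ≤ _ := hbound
  calc ‖((ℝ ∙ v) ⊔ K).starProjection A‖
      = ‖(ℝ ∙ u).starProjection A + K.starProjection A‖ := by
        simp only [hspan, hortho.starProjection_sup_apply]
    _ ≤ ‖(ℝ ∙ u).starProjection A‖ + ‖K.starProjection A‖ := norm_add_le _ _
    _ ≤ (‖(ℝ ∙ v).starProjection A‖ + ‖K.starProjection A‖) / c + ‖K.starProjection A‖ := by
        gcongr
        rwa [le_div_iff₀' hc]
    _ = _ := by ring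

end Projection

section FiniteDimensional

variable {E : Type*} [NormedAddCommGroup E] [InnerProductSpace ℝ E] [FiniteDimensional ℝ E]

theorem orthogonal_span_image_Ioi_ne_bot {k : ℕ} (ν : Fin k → E) (hk : k ≤ Module.finrank ℝ E)
    (i : Fin k) : (span ℝ (ν '' Ioi i))ᗮ ≠ ⊥ := by
  classical
  rw [Ne, orthogonal_eq_bot_iff]
  intro htop
  have hle := finrank_span_finset_le_card (R := ℝ) ((Finset.Ioi i).image ν)
  rw [Finset.coe_image, Finset.coe_Ioi, Set.finrank, htop, finrank_top] at hle
  have := (hle.trans Finset.card_image_le).trans_eq (Fin.card_Ioi i)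
  omega

theorem norm_starProjection_span_range_le {k : ℕ} (ν : Fin k → E) {c : ℝ} (hc : 0 < c)
    (hν : ∀ i, c * ‖ν i‖ ≤ ‖(span ℝ (ν '' Ioi i))ᗮ.starProjection (ν i)‖) (A : E) :
    ‖(span ℝ (range ν)).starProjection A‖ ≤
      (1 + 2 / c) ^ k * ∑ i, ‖(ℝ ∙ ν i).starProjection A‖ := by
  induction k with
  | zero => simp
  | succ k ih =>
    have htail := ih (Fin.tail ν) fun i => by
      have := hν i.succ
      rwa [Fin.image_Ioi_succ] at this
    have hstep := norm_starProjection_sup_le hc (hν 0) A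
    simp only [Fin.image_Ioi_zero, ← span_insert, ← Fin.range_fin_succ] at hstep
    rw [Fin.sum_univ_succ, pow_succ]
    set s := ‖(ℝ ∙ ν 0).starProjection A‖
    set S := ∑ i : Fin k, ‖(ℝ ∙ Fin.tail ν i).starProjection A‖
    set Q := (1 + 2 / c) ^ k
    have hQ : 1 ≤ Q := one_le_pow₀ (le_add_of_nonneg_right (by positivity))
    have hs : 0 ≤ s := norm_nonneg _
    have hS : 0 ≤ S := Finset.sum_nonneg fun i _ => norm_nonneg _
    have hc' : 0 < 1 / c := by positivity
    calc ‖(span ℝ (range ν)).starProjection A‖ ≤ (1 + 1 / c) * (Q * S) + 1 / c * s :=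
          hstep.trans (by gcongr)
      _ ≤ Q * (1 + 2 / c) * (s + S) := by
          rw [div_eq_mul_one_div 2 c]
          nlinarith [mul_nonneg hc'.le hS, mul_nonneg (mul_nonneg hc'.le hs) (sub_nonneg.2 hQ),
            mul_nonneg hs (sub_nonneg.2 hQ), mul_nonneg hc'.le (mul_nonneg hS (sub_nonneg.2 hQ))]

end FiniteDimensional

theorem cos_mul_norm_le_norm_starProjection_of_lineSubspaceAngle_le {n : ℕ}
    {v : EuclideanSpace ℝ (Fin n)} {K : Submodule ℝ (EuclideanSpace ℝ (Fin n))} (hK : K ≠ ⊥)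
    {ζ : ℝ} (hζ : lineSubspaceAngle v K ≤ ζ) (hζπ : ζ < Real.pi) :
    Real.cos ζ * ‖v‖ ≤ ‖K.starProjection v‖ := by
  obtain ⟨w₀, hw₀, hw₀0⟩ := (Submodule.ne_bot_iff K).mp hK
  have hne : {θ | ∃ w ∈ K, w ≠ 0 ∧ θ = angle v w}.Nonempty := ⟨_, w₀, hw₀, hw₀0, rfl⟩
  have hbdd : BddBelow {θ | ∃ w ∈ K, w ≠ 0 ∧ θ = angle v w} :=
    ⟨0, by rintro _ ⟨w, -, -, rfl⟩; exact angle_nonneg v w⟩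
  have hnear : ∀ θ ∈ Ioo ζ Real.pi, Real.cos θ * ‖v‖ ≤ ‖K.starProjection v‖ := by
    rintro θ ⟨hζθ, hθπ⟩
    obtain ⟨_, ⟨w, hw, -, rfl⟩, hwθ⟩ := (csInf_lt_iff hbdd hne).mp (hζ.trans_lt hζθ)
    refine le_trans ?_ (cos_angle_mul_norm_le_norm_starProjection K v hw)
    gcongr
    exact Real.cos_le_cos_of_nonneg_of_le_pi (angle_nonneg v w) hθπ.le hwθ.le
  have hlim : Tendsto (fun θ => Real.cos θ * ‖v‖) (𝓝[>] ζ) (𝓝 (Real.cos ζ * ‖v‖)) :=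
    ((Real.continuous_cos.mul continuous_const).tendsto ζ).mono_left nhdsWithin_le_nhds
  exact le_of_tendsto hlim (eventually_of_mem (Ioo_mem_nhdsGT hζπ) hnear)

/-- If `ν 1, …, ν k ∈ Π` are nonzero vectors such that each line `span{ν i}`
makes angle at most `ζ` with the orthogonal complement of `span{ν (i+1), …, ν k}`,
then `|p_Π(A)| ≤ C·Σ_i |p_{span{ν i}}(A)|` with `C` depending only on `k` and `ζ`. -/
theorem proj_le_sum_proj (k : ℕ) (ζ : ℝ) (hζ : 0 < ζ ∧ ζ < Real.pi / 2) :
    ∃ C > 0, ∀ (n : ℕ) (Pl : Submodule ℝ (EuclideanSpace ℝ (Fin n)))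
      (ν : Fin k → EuclideanSpace ℝ (Fin n)),
      Module.finrank ℝ Pl = k →
      (∀ i, ν i ∈ Pl) → (∀ i, ν i ≠ 0) →
      (∀ i : Fin k, (i : ℕ) < k - 1 →
        lineSubspaceAngle (ν i)
          ((Submodule.span ℝ {w | ∃ j : Fin k, i < j ∧ w = ν j})ᗮ) ≤ ζ) →
      ∀ A : EuclideanSpace ℝ (Fin n),
        ‖(Submodule.orthogonalProjectionOnto Pl A : EuclideanSpace ℝ (Fin n))‖ ≤
          C * ∑ i : Fin k,
            ‖(Submodule.orthogonalProjectionOnto (Submodule.span ℝ {ν i}) A :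
              EuclideanSpace ℝ (Fin n))‖ := by
  have hc : 0 < Real.cos ζ := Real.cos_pos_of_mem_Ioo ⟨by linarith, hζ.2⟩
  refine ⟨(1 + 2 / Real.cos ζ) ^ k, by positivity, fun n Pl ν hrank hmem hne hang A => ?_⟩
  have hkn : k ≤ Module.finrank ℝ (EuclideanSpace ℝ (Fin n)) := hrank ▸ Pl.finrank_le
  have hν (i : Fin k) :
      Real.cos ζ * ‖ν i‖ ≤ ‖(span ℝ (ν '' Ioi i))ᗮ.starProjection (ν i)‖ := by
    by_cases hi : (i : ℕ) < k - 1
    · have hangle := hang i hi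
      rw [show {w | ∃ j, i < j ∧ w = ν j} = ν '' Ioi i by ext; simp [eq_comm]] at hangle
      exact cos_mul_norm_le_norm_starProjection_of_lineSubspaceAngle_le
        (orthogonal_span_image_Ioi_ne_bot ν hkn i) hangle (by linarith [Real.pi_pos])
    · have hIoi : Ioi i = ∅ := Ioi_eq_empty_iff.mpr fun j _ => Fin.le_def.mpr (by omega)
      simpa [hIoi, starProjection_top] using
        mul_le_of_le_one_left (norm_nonneg (ν i)) (Real.cos_le_one ζ)
  have hli : LinearIndependent ℝ ν := linearIndependent_of_notMem_span_image_Ioi fun i hi => by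
    have hzero : (span ℝ (ν '' Ioi i))ᗮ.starProjection (ν i) = 0 := by
      rw [starProjection_orthogonal_val, starProjection_eq_self_iff.mpr hi, sub_self]
    have := hν i
    rw [hzero, norm_zero] at this
    exact (mul_pos hc (norm_pos_iff.mpr (hne i))).not_ge this
  have hspan : span ℝ (range ν) = Pl :=
    eq_of_le_of_finrank_eq (span_le.mpr (range_subset_iff.mpr hmem))
      (by rw [finrank_span_eq_card hli, Fintype.card_fin, hrank])
  simpa [← hspan] using norm_starProjection_span_range_le ν hc hν A
end

section
/- Let D ⊂ ℝ^n be a bounded convex set with nonempty interior containing the origin. Then there exist ε_0 > 0 and ξ̄ ∈ (0, π/2), depending only on D, such that for every linear subspace Π ⊂ ℝ^n of positive dimension and every x ∈ ∂D with angle between the line through 0 and x and Π at most ε_0, every external normal ν_x to D at x satisfies angle(ν_x, Π) < ξ̄. -/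
open InnerProductGeometry RealInnerProductSpace

section InnerProductSpace

variable {V : Type*} [NormedAddCommGroup V] [InnerProductSpace ℝ V]

lemma mul_norm_le_inner_of_closedBall_subset {D : Set V} {x ν : V} {r : ℝ} (hr : 0 ≤ r)
    (hball : Metric.closedBall 0 r ⊆ D) (hν : ∀ y ∈ D, ⟪y - x, ν⟫ ≤ 0) :
    r * ‖ν‖ ≤ ⟪x, ν⟫ := by
  rcases eq_or_ne ν 0 with rfl | hν0
  · simp
  have hνpos : 0 < ‖ν‖ := norm_pos_iff.mpr hν0
  have hyD : (r / ‖ν‖) • ν ∈ D := hball <| by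
    rw [mem_closedBall_zero_iff, norm_smul, Real.norm_of_nonneg (by positivity),
      div_mul_cancel₀ _ hνpos.ne']
  have hyν : ⟪(r / ‖ν‖) • ν, ν⟫ = r * ‖ν‖ := by
    rw [real_inner_smul_left, real_inner_self_eq_norm_sq]
    field_simp
  have hnormal := hν _ hyD
  rw [inner_sub_left, hyν] at hnormal
  linarith

lemma angle_le_arccos_of_mul_norm_le_inner {x ν : V} {r R : ℝ} (hr : 0 < r) (hν : ν ≠ 0)
    (hxR : ‖x‖ ≤ R) (h : r * ‖ν‖ ≤ ⟪x, ν⟫) : angle x ν ≤ Real.arccos (r / R) := by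
  have hνpos : 0 < ‖ν‖ := norm_pos_iff.mpr hν
  have hrx : r ≤ ‖x‖ := le_of_mul_le_mul_right (h.trans (real_inner_le_norm x ν)) hνpos
  have hxpos : 0 < ‖x‖ := hr.trans_le hrx
  refine Real.arccos_le_arccos ?_
  calc r / R ≤ r / ‖x‖ := div_le_div_of_nonneg_left hr.le hxpos hxR
    _ = r * ‖ν‖ / (‖x‖ * ‖ν‖) := (mul_div_mul_right _ _ hνpos.ne').symm
    _ ≤ ⟪x, ν⟫ / (‖x‖ * ‖ν‖) := by gcongr

end InnerProductSpace

section lineSubspaceAngle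

variable {n : ℕ} {W : Submodule ℝ (EuclideanSpace ℝ (Fin n))}

lemma lineSubspaceAngle_le_angle (v : EuclideanSpace ℝ (Fin n)) {w : EuclideanSpace ℝ (Fin n)}
    (hw : w ∈ W) (hw0 : w ≠ 0) : lineSubspaceAngle v W ≤ angle v w :=
  csInf_le ⟨0, by rintro _ ⟨w, -, -, rfl⟩; exact angle_nonneg v w⟩ ⟨w, hw, hw0, rfl⟩

lemma lineSubspaceAngle_le_angle_add_lineSubspaceAngle (hW : W ≠ ⊥)
    (u v : EuclideanSpace ℝ (Fin n)) :
    lineSubspaceAngle v W ≤ angle v u + lineSubspaceAngle u W := by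
  obtain ⟨w₀, hw₀, hw₀0⟩ := W.ne_bot_iff.mp hW
  rw [← sub_le_iff_le_add']
  refine le_csInf ⟨_, w₀, hw₀, hw₀0, rfl⟩ ?_
  rintro _ ⟨w, hw, hw0, rfl⟩
  rw [sub_le_iff_le_add']
  exact (lineSubspaceAngle_le_angle v hw hw0).trans (angle_le_angle_add_angle v u w)

end lineSubspaceAngle

theorem external_normal_angle_bound_general {n : ℕ}
    (D : Set (EuclideanSpace ℝ (Fin n)))
    (hDb : Bornology.IsBounded D) (h0 : (0 : EuclideanSpace ℝ (Fin n)) ∈ interior D) :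
    ∃ ε₀ > 0, ∃ ξ : ℝ, 0 < ξ ∧ ξ < Real.pi / 2 ∧
      ∀ Pl : Submodule ℝ (EuclideanSpace ℝ (Fin n)), Pl ≠ ⊥ →
        ∀ x ∈ frontier D, lineSubspaceAngle x Pl ≤ ε₀ →
          ∀ νx : EuclideanSpace ℝ (Fin n), νx ≠ 0 →
            (∀ y ∈ D, inner ℝ (y - x) νx ≤ (0 : ℝ)) →
            lineSubspaceAngle νx Pl < ξ := by
  obtain ⟨r, hr, hball⟩ :=
    Metric.nhds_basis_closedBall.mem_iff.mp (mem_interior_iff_mem_nhds.mp h0)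
  obtain ⟨R, hR, hDR⟩ := hDb.subset_closedBall_lt 0 0
  set α := Real.arccos (r / R)
  have hα : α < Real.pi / 2 := Real.arccos_lt_pi_div_two.mpr (by positivity)
  set ε₀ := (Real.pi / 2 - α) / 3 with hε₀
  have hε₀pos : 0 < ε₀ := div_pos (sub_pos.mpr hα) three_pos
  refine ⟨ε₀, hε₀pos, α + 2 * ε₀, add_pos_of_nonneg_of_pos (Real.arccos_nonneg _) (by positivity),
    by linarith, ?_⟩
  intro Pl hPl x hx hxPl ν hν hνnormal
  have hxR : ‖x‖ ≤ R :=
    mem_closedBall_zero_iff.mp (closure_minimal hDR Metric.isClosed_closedBall hx.1)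
  have hxν : angle ν x ≤ α := angle_comm x ν ▸ angle_le_arccos_of_mul_norm_le_inner hr hν hxR
    (mul_norm_le_inner_of_closedBall_subset hr.le hball hνnormal)
  linarith [lineSubspaceAngle_le_angle_add_lineSubspaceAngle hPl x ν]

/-- For a bounded convex set `D` with `0` in its interior there are `ε₀ > 0` and
`ξ̄ ∈ (0, π/2)` such that for any linear subspace `Π` of positive dimension and
any `x ∈ ∂D` whose direction makes angle at most `ε₀` with `Π`, every external
normal to `D` at `x` makes angle `< ξ̄` with `Π`. -/
theorem external_normal_angle_bound {n : ℕ}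
    (D : Set (EuclideanSpace ℝ (Fin n))) (hD : Convex ℝ D)
    (hDb : Bornology.IsBounded D) (h0 : (0 : EuclideanSpace ℝ (Fin n)) ∈ interior D) :
    ∃ ε₀ > 0, ∃ ξ : ℝ, 0 < ξ ∧ ξ < Real.pi / 2 ∧
      ∀ Pl : Submodule ℝ (EuclideanSpace ℝ (Fin n)), Pl ≠ ⊥ →
        ∀ x ∈ frontier D, lineSubspaceAngle x Pl ≤ ε₀ →
          ∀ νx : EuclideanSpace ℝ (Fin n), νx ≠ 0 →
            (∀ y ∈ D, inner ℝ (y - x) νx ≤ (0 : ℝ)) →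
            lineSubspaceAngle νx Pl < ξ :=
  external_normal_angle_bound_general D hDb h0
end

section
/- Let ‖·‖ be a norm on ℝ^n. There exists a constant ε̄ > 0, depending only on ‖·‖, such that for all distinct points A, B ∈ ℝ^n and every C in the mediatrix M(A,B) = {z : ‖A - z‖ = ‖B - z‖} with the (Euclidean) angle ∠ABC ≤ 2ε̄, one has |B - C| ≤ (3/4)·|A - B|, where |·| is the Euclidean norm. -/
/-!
Since `N` is a norm on a finite-dimensional space, `m * ‖x‖ ≤ N x ≤ M * ‖x‖`. Put `B = 0`,
`u = A`, `v = C`, `d = ‖u‖`, `r = ‖v‖` and `w = u / d`. A small angle makes `e = v - r • w`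
Euclidean-small, so `N e ≤ r * N w / 4` once `∠ABC ≤ m / (4M)`. Now compare the two sides of
`N (v - u) = N v`, where `N v ≥ r * N w - N e`. If `r ≤ d`, the triangle inequality gives
`N (v - u) ≤ (d - r) * N w + N e`, whence `r ≤ 2d/3`. If `r > d`, then `v - u` is a convex
combination of `v` and `e`, so `N v ≤ N e`, which contradicts
`N e ≤ r * N w / 4`.
-/

open InnerProductGeometry NormedSpace

namespace Seminorm

variable {E : Type*}

theorem exists_le_mul_norm [NormedAddCommGroup E] [NormedSpace ℝ E] [FiniteDimensional ℝ E]
    (p : Seminorm ℝ E) : ∃ C, 0 < C ∧ ∀ x, p x ≤ C * ‖x‖ :=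
  p.bound_of_continuous_normedSpace p.convexOn.locallyLipschitz.continuous

theorem exists_mul_norm_le [NormedAddCommGroup E] [NormedSpace ℝ E] [FiniteDimensional ℝ E]
    (p : Seminorm ℝ E) (hp : ∀ x, p x = 0 → x = 0) : ∃ c, 0 < c ∧ ∀ x, c * ‖x‖ ≤ p x := by
  cases subsingleton_or_nontrivial E
  · exact ⟨1, one_pos, fun x => by simp [Subsingleton.elim x 0]⟩
  obtain ⟨x₀, hx₀, hmin⟩ := (isCompact_sphere (0 : E) 1).exists_isMinOn
    (NormedSpace.sphere_nonempty.mpr zero_le_one)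
    p.convexOn.locallyLipschitz.continuous.continuousOn
  have hx₀ : x₀ ≠ 0 := ne_zero_of_mem_unit_sphere ⟨x₀, hx₀⟩
  refine ⟨p x₀, (apply_nonneg p x₀).lt_of_ne' (mt (hp x₀) hx₀), fun x => ?_⟩
  rcases eq_or_ne x 0 with rfl | hx
  · simp
  have hnx : normalize x ∈ Metric.sphere (0 : E) 1 := by
    simpa using norm_normalize_eq_one_iff.mpr hx
  calc p x₀ * ‖x‖ ≤ p (normalize x) * ‖x‖ := by gcongr; exact hmin hnx
    _ = p x := by
      conv_rhs => rw [← norm_smul_normalize x, map_smul_eq_mul, norm_norm, mul_comm]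

theorem le_of_map_add_sub_smul_eq [AddCommGroup E] [Module ℝ E] (p : Seminorm ℝ E)
    {w e : E} {r d : ℝ} (hw : 0 < p w) (hd : 0 < d) (he : p e ≤ r * p w / 4)
    (heq : p (r • w + e - d • w) = p (r • w + e)) : r ≤ 3 / 4 * d := by
  have hpe := apply_nonneg p e
  have hr : 0 ≤ r := by nlinarith
  have hlow : r * p w - p e ≤ p (r • w + e) := by
    have := map_sub_le_add p (r • w + e) e
    rw [add_sub_cancel_right, map_smul_eq_mul, Real.norm_of_nonneg hr] at this
    linarith
  rcases le_or_gt r d with hrd | hdr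
  · have hup : p (r • w + e - d • w) ≤ (d - r) * p w + p e := by
      calc p (r • w + e - d • w) = p ((r - d) • w + e) := by congr 1; module
        _ ≤ p ((r - d) • w) + p e := map_add_le_add p _ _
        _ = (d - r) * p w + p e := by
          rw [map_smul_eq_mul, Real.norm_eq_abs, abs_of_nonpos (by linarith), neg_sub]
    nlinarith
  · set l := d / r
    have hl : 0 < l := div_pos hd (hd.trans hdr)
    have hl1 : l < 1 := (div_lt_one (hd.trans hdr)).mpr hdr
    have hconv : p (r • w + e - d • w) ≤ (1 - l) * p (r • w + e) + l * p e := by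
      calc p (r • w + e - d • w) = p ((1 - l) • (r • w + e) + l • e) := by
            congr 1
            have : l * r = d := div_mul_cancel₀ d (hd.trans hdr).ne'
            rw [← this]; module
        _ ≤ _ := p.convexOn.2 trivial trivial (by linarith) hl.le (by ring)
    have : p (r • w + e) ≤ p e := by nlinarith
    nlinarith

end Seminorm

namespace InnerProductGeometry

variable {V : Type*} [NormedAddCommGroup V] [InnerProductSpace ℝ V]

theorem norm_sub_le_angle {x y : V} (hx : ‖x‖ = 1) (hy : ‖y‖ = 1) : ‖x - y‖ ≤ angle x y := by
  have hsq : ‖x - y‖ ^ 2 = 2 - 2 * Real.cos (angle x y) := by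
    rw [norm_sub_sq_real, inner_eq_cos_angle_of_norm_eq_one hx hy, hx, hy]; ring
  refine le_of_sq_le_sq ?_ (angle_nonneg x y)
  linarith [Real.one_sub_sq_div_two_le_cos (x := angle x y)]

theorem norm_sub_norm_smul_normalize_le {u : V} (hu : u ≠ 0) (v : V) :
    ‖v - ‖v‖ • normalize u‖ ≤ ‖v‖ * angle u v := by
  rcases eq_or_ne v 0 with rfl | hv
  · simp
  calc ‖v - ‖v‖ • normalize u‖ = ‖‖v‖ • (normalize v - normalize u)‖ := by
        rw [smul_sub, norm_smul_normalize]
    _ = ‖v‖ * ‖normalize v - normalize u‖ := by rw [norm_smul, norm_norm]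
    _ ≤ ‖v‖ * angle u v := by
        gcongr
        rw [angle_comm]
        simpa using norm_sub_le_angle (norm_normalize_eq_one_iff.mpr hv)
          (norm_normalize_eq_one_iff.mpr hu)

end InnerProductGeometry

theorem Seminorm.norm_le_of_map_sub_eq_of_angle_le {E : Type*} [NormedAddCommGroup E]
    [InnerProductSpace ℝ E] (p : Seminorm ℝ E) {m M : ℝ} (hm : 0 < m) (hM : 0 < M)
    (hlow : ∀ x, m * ‖x‖ ≤ p x) (hup : ∀ x, p x ≤ M * ‖x‖) {u v : E} (hu : u ≠ 0)
    (hpuv : p (v - u) = p v) (hangle : angle u v ≤ m / (4 * M)) : ‖v‖ ≤ 3 / 4 * ‖u‖ := by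
  set w := normalize u
  have hw : m ≤ p w := by simpa [w, norm_normalize_eq_one_iff.mpr hu] using hlow w
  have he : p (v - ‖v‖ • w) ≤ ‖v‖ * p w / 4 :=
    calc p (v - ‖v‖ • w) ≤ M * (‖v‖ * (m / (4 * M))) :=
          (hup _).trans (by gcongr; exact (norm_sub_norm_smul_normalize_le hu v).trans (by gcongr))
      _ = ‖v‖ * m / 4 := by field_simp
      _ ≤ ‖v‖ * p w / 4 := by gcongr
  refine p.le_of_map_add_sub_smul_eq (hm.trans_le hw) (norm_pos_iff.mpr hu) he ?_
  rwa [norm_smul_normalize, add_sub_cancel]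

/-- There is `ε̄ > 0` depending only on the norm `N` such that for any distinct
`A, B` and any `C` in the mediatrix of `{A, B}` with Euclidean angle
`∠ABC ≤ 2ε̄`, one has `|B - C| ≤ (3/4)·|A - B|`. -/
theorem mediatrix_small_angle {n : ℕ}
    (N : EuclideanSpace ℝ (Fin n) → ℝ)
    (hN0 : ∀ x, N x = 0 ↔ x = 0)
    (hNsmul : ∀ (c : ℝ) x, N (c • x) = |c| * N x)
    (hNadd : ∀ x y, N (x + y) ≤ N x + N y) :
    ∃ ε > 0, ∀ A B C : EuclideanSpace ℝ (Fin n), A ≠ B →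
      N (A - C) = N (B - C) →
      EuclideanGeometry.angle A B C ≤ 2 * ε →
      ‖B - C‖ ≤ 3 / 4 * ‖A - B‖ := by
  let p : Seminorm ℝ (EuclideanSpace ℝ (Fin n)) := .of N hNadd hNsmul
  obtain ⟨m, hm, hlow⟩ := p.exists_mul_norm_le fun x => (hN0 x).mp
  obtain ⟨M, hM, hup⟩ := p.exists_le_mul_norm
  refine ⟨m / (8 * M), by positivity, fun A B C hAB hmed hangle => ?_⟩
  rw [norm_sub_rev]
  refine p.norm_le_of_map_sub_eq_of_angle_le hm hM hlow hup (sub_ne_zero.mpr hAB) ?_ ?_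
  · rw [sub_sub_sub_cancel_right, map_sub_rev p C A, map_sub_rev p C B]
    exact hmed
  · calc angle (A - B) (C - B) = EuclideanGeometry.angle A B C := rfl
      _ ≤ m / (4 * M) := hangle.trans_eq (by ring)
end

section
/- Let ‖·‖ be a norm on ℝ^n. There exists ε_1 ∈ (0, π/2) depending only on ‖·‖ such that whenever (A_1, A_2, A_3) is self-contracted with respect to ‖·‖ and the Euclidean angle ∠A_1 A_2 A_3 ≤ 2ε_1, then |A_2 - A_3| ≤ (3/4)·|A_1 - A_2|. -/
/-!
Write `u = A₁ - A₂`, `v = A₃ - A₂`, `θ` for the angle between them, and `c ‖·‖ ≤ N ≤ C ‖·‖`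
(equivalence of norms in finite dimension). Self-contraction says `N v ≤ N (v - u)`, and
`‖v‖ • (v - u) = (‖v‖ - ‖u‖) • v + (‖u‖ • v - ‖v‖ • u)`, where the last vector is the chord
between two vectors of length `‖u‖ ‖v‖` at angle `θ`, of Euclidean length at most
`‖u‖ ‖v‖ θ`. Hence `(‖v‖ - |‖v‖ - ‖u‖|) N v ≤ C ‖u‖ ‖v‖ θ`. If `‖v‖ > 3/4 ‖u‖` the left side is
at least `c ‖u‖ ‖v‖ / 2`, which is impossible once `θ < c / (2C)`.
-/

open InnerProductGeometry

theorem InnerProductGeometry.norm_smul_sub_smul_le_mul_angle {E : Type*}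
    [NormedAddCommGroup E] [InnerProductSpace ℝ E] (u v : E) :
    ‖‖u‖ • v - ‖v‖ • u‖ ≤ ‖u‖ * ‖v‖ * angle u v := by
  have hcos := Real.one_sub_sq_div_two_le_cos (x := angle u v)
  have hinner := cos_angle_mul_norm_mul_norm u v
  have hsq : ‖‖u‖ • v - ‖v‖ • u‖ ^ 2 ≤ (‖u‖ * ‖v‖ * angle u v) ^ 2 := by
    rw [norm_sub_sq_real, norm_smul, norm_smul, real_inner_smul_left, real_inner_smul_right,
      real_inner_comm, ← hinner, Real.norm_of_nonneg (norm_nonneg _),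
      Real.norm_of_nonneg (norm_nonneg _)]
    have : 0 ≤ (‖u‖ * ‖v‖) ^ 2 := sq_nonneg _
    nlinarith
  exact (pow_le_pow_iff_left₀ (norm_nonneg _)
    (by have := angle_nonneg u v; positivity) two_ne_zero).mp hsq

namespace Seminorm

section FiniteDimensional

variable {E : Type*} [NormedAddCommGroup E] [NormedSpace ℝ E] [FiniteDimensional ℝ E]
  (p : Seminorm ℝ E)

protected theorem continuous_of_finiteDimensional : Continuous p := by
  rw [← continuousOn_univ, ← interior_univ]
  exact p.convexOn.continuousOn_interior

theorem exists_pos_mul_norm_le (hp : ∀ x, p x = 0 → x = 0) :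
    ∃ c, 0 < c ∧ ∀ x, c * ‖x‖ ≤ p x := by
  rcases subsingleton_or_nontrivial E with hE | hE
  · exact ⟨1, one_pos, fun x => by simp [Subsingleton.elim x 0]⟩
  obtain ⟨x₀, hx₀, hmin⟩ := (isCompact_sphere (0 : E) 1).exists_isMinOn
    (NormedSpace.sphere_nonempty.mpr zero_le_one) p.continuous_of_finiteDimensional.continuousOn
  have hx₀ : ‖x₀‖ = 1 := mem_sphere_zero_iff_norm.mp hx₀
  refine ⟨p x₀, (apply_nonneg p x₀).lt_of_ne' fun h => ?_, fun x => ?_⟩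
  · simp [hp x₀ h] at hx₀
  rcases eq_or_ne x 0 with rfl | hx
  · simp
  have hunit : ‖x‖⁻¹ • x ∈ Metric.sphere (0 : E) 1 := by
    simp [norm_smul, hx]
  calc p x₀ * ‖x‖ ≤ p (‖x‖⁻¹ • x) * ‖x‖ := by gcongr; exact hmin hunit
    _ = p x := by
      rw [map_smul_eq_mul, norm_inv, norm_norm, mul_comm, ← mul_assoc,
        mul_inv_cancel₀ (norm_ne_zero_iff.mpr hx), one_mul]

end FiniteDimensional

section InnerProductSpace

variable {E : Type*} [NormedAddCommGroup E] [InnerProductSpace ℝ E]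
  (p : Seminorm ℝ E) {C : ℝ}

theorem sub_abs_sub_mul_le_of_apply_le_apply_sub (hC0 : 0 ≤ C) (hC : ∀ x, p x ≤ C * ‖x‖) {u v : E}
    (h : p v ≤ p (v - u)) :
    (‖v‖ - |‖v‖ - ‖u‖|) * p v ≤ C * (‖u‖ * ‖v‖ * angle u v) := by
  have hdecomp : ‖v‖ • (v - u) = (‖v‖ - ‖u‖) • v + (‖u‖ • v - ‖v‖ • u) := by module
  calc (‖v‖ - |‖v‖ - ‖u‖|) * p v = ‖v‖ * p v - |‖v‖ - ‖u‖| * p v := sub_mul ..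
    _ ≤ ‖v‖ * p (v - u) - |‖v‖ - ‖u‖| * p v := by gcongr
    _ = p ((‖v‖ - ‖u‖) • v + (‖u‖ • v - ‖v‖ • u)) - |‖v‖ - ‖u‖| * p v := by
      rw [← hdecomp, map_smul_eq_mul, norm_norm]
    _ ≤ p (‖u‖ • v - ‖v‖ • u) := by
      grw [map_add_le_add, map_smul_eq_mul, Real.norm_eq_abs, add_sub_cancel_left]
    _ ≤ C * (‖u‖ * ‖v‖ * angle u v) :=
      (hC _).trans (mul_le_mul_of_nonneg_left (norm_smul_sub_smul_le_mul_angle u v) hC0)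

theorem norm_le_of_apply_le_apply_sub {c : ℝ} (hc : ∀ x, c * ‖x‖ ≤ p x) (hC0 : 0 ≤ C)
    (hC : ∀ x, p x ≤ C * ‖x‖) {u v : E} (hu : u ≠ 0) (h : p v ≤ p (v - u))
    (hangle : 2 * C * angle u v < c) : ‖v‖ ≤ 3 / 4 * ‖u‖ := by
  by_contra! hlt
  have hc0 : 0 < c := lt_of_le_of_lt (by have := angle_nonneg u v; positivity) hangle
  have hu' : 0 < ‖u‖ := norm_pos_iff.mpr hu
  have hv : 0 < ‖v‖ := by linarith
  have hhalf : ‖u‖ / 2 ≤ ‖v‖ - |‖v‖ - ‖u‖| := by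
    cases abs_cases (‖v‖ - ‖u‖) <;> linarith
  have hkey := p.sub_abs_sub_mul_le_of_apply_le_apply_sub hC0 hC h
  have : ‖u‖ / 2 * (c * ‖v‖) ≤ (‖v‖ - |‖v‖ - ‖u‖|) * p v :=
    mul_le_mul hhalf (hc v) (by positivity) (by linarith)
  have : ‖u‖ * ‖v‖ * c ≤ ‖u‖ * ‖v‖ * (2 * C * angle u v) := by linarith
  exact (le_of_mul_le_mul_left this (by positivity)).not_gt hangle

end InnerProductSpace

end Seminorm

/-- There is `ε₁ ∈ (0, π/2)` depending only on the norm `N` such that whenever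
`(A₁, A₂, A₃)` is self-contracted with respect to `N` and the Euclidean angle
`∠A₁A₂A₃ ≤ 2ε₁`, then `|A₂ - A₃| ≤ (3/4)·|A₁ - A₂|`. -/
theorem selfContracted_small_angle {n : ℕ}
    (N : EuclideanSpace ℝ (Fin n) → ℝ)
    (hN0 : ∀ x, N x = 0 ↔ x = 0)
    (hNsmul : ∀ (c : ℝ) x, N (c • x) = |c| * N x)
    (hNadd : ∀ x y, N (x + y) ≤ N x + N y) :
    ∃ ε₁ : ℝ, 0 < ε₁ ∧ ε₁ < Real.pi / 2 ∧
      ∀ A₁ A₂ A₃ : EuclideanSpace ℝ (Fin n),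
        N (A₃ - A₂) ≤ N (A₃ - A₁) →
        EuclideanGeometry.angle A₁ A₂ A₃ ≤ 2 * ε₁ →
        ‖A₂ - A₃‖ ≤ 3 / 4 * ‖A₁ - A₂‖ := by
  let p : Seminorm ℝ (EuclideanSpace ℝ (Fin n)) := .of N hNadd fun a x => hNsmul a x
  obtain ⟨c, hc, hcp⟩ := p.exists_pos_mul_norm_le fun x => (hN0 x).mp
  obtain ⟨C, hC, hpC⟩ := p.bound_of_continuous_normedSpace p.continuous_of_finiteDimensional
  have hpi := Real.pi_gt_three
  have hε : min (c / (8 * C)) (1 / 2) ≤ 1 / 2 := min_le_right _ _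
  refine ⟨min (c / (8 * C)) (1 / 2), by positivity, by linarith, fun A₁ A₂ A₃ hsc hangle => ?_⟩
  have hu : A₁ - A₂ ≠ 0 := fun h => by
    rw [EuclideanGeometry.angle, vsub_eq_sub, h, angle_zero_left] at hangle
    linarith
  have hCangle : 2 * C * angle (A₁ - A₂) (A₃ - A₂) < c := by
    have : 2 * C * angle (A₁ - A₂) (A₃ - A₂) ≤ c / 2 := calc
      _ ≤ 2 * C * (2 * (c / (8 * C))) := by
        gcongr; exact hangle.trans (by gcongr; exact min_le_left _ _)
      _ = c / 2 := by field_simp; ring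
    linarith
  rw [norm_sub_rev]
  refine p.norm_le_of_apply_le_apply_sub hcp hC.le hpC hu ?_ hCangle
  change N (A₃ - A₂) ≤ N (A₃ - A₂ - (A₁ - A₂))
  rwa [sub_sub_sub_cancel_right]
end

section
/- Let ‖·‖ be a norm on ℝ^n and ε_1 > 0 the constant from the small-angle contraction lemma (i.e., whenever (P,Q,R) is self-contracted and ∠PQR ≤ 2ε_1 then |QR| ≤ (3/4)|PQ|). Suppose (A_1, ..., A_r) is self-contracted with respect to ‖·‖, has alternating directions along an axis x = span{ν} (i.e., the signs of (A_{k+1} - A_k)·ν alternate in k), and each segment [A_k A_{k+1}] makes angle at most ε_1 with the line x. Then the total Euclidean length satisfies ℓ(A_1, ..., A_r) = Σ_{k=1}^{r-1} |A_k A_{k+1}| ≤ 4·|A_1 - A_2|. -/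
/-!
At an interior vertex the two adjacent segments point to opposite sides along `ν`, so the
angle `∠A_{k-1}A_kA_{k+1}` is bounded, through `ν` or `-ν`, by the sum of the angles the two
segments make with the axis, i.e. by `2ε₁`. The contraction property then gives
`|A_kA_{k+1}| ≤ (3/4)|A_{k-1}A_k|`, and the lengths are dominated by a geometric series.
-/

open InnerProductGeometry

open Real Finset

section GeometricDomination

variable {K : Type*} [Field K] [LinearOrder K] [IsStrictOrderedRing K]

lemma le_pow_mul_of_succ_le_mul {a : ℕ → K} {c : K} {r : ℕ} (hc : 0 ≤ c)
    (h : ∀ k, k + 1 < r → a (k + 1) ≤ c * a k) : ∀ k < r, a k ≤ c ^ k * a 0 := by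
  intro k hk
  induction k with
  | zero => simp
  | succ k ih =>
    calc a (k + 1) ≤ c * a k := h k hk
      _ ≤ c * (c ^ k * a 0) := mul_le_mul_of_nonneg_left (ih (by omega)) hc
      _ = c ^ (k + 1) * a 0 := by ring

lemma sum_range_le_div_one_sub_of_succ_le_mul {a : ℕ → K} {c : K} {r : ℕ} (hc0 : 0 ≤ c)
    (hc1 : c < 1) (ha0 : 0 ≤ a 0) (h : ∀ k, k + 1 < r → a (k + 1) ≤ c * a k) :
    ∑ k ∈ range r, a k ≤ a 0 / (1 - c) :=
  calc ∑ k ∈ range r, a k ≤ ∑ k ∈ range r, c ^ k * a 0 :=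
        sum_le_sum fun k hk ↦ le_pow_mul_of_succ_le_mul hc0 h k (mem_range.1 hk)
    _ = (∑ k ∈ Ico 0 r, c ^ k) * a 0 := by rw [← sum_mul, range_eq_Ico]
    _ ≤ c ^ 0 / (1 - c) * a 0 :=
        mul_le_mul_of_nonneg_right (geom_sum_Ico_le_of_lt_one hc0 hc1) ha0
    _ = a 0 / (1 - c) := by ring

end GeometricDomination

lemma span_singleton_neg {R M : Type*} [Ring R] [AddCommGroup M] [Module R M] (x : M) :
    Submodule.span R {-x} = Submodule.span R {x} := by
  rw [← Set.neg_singleton, Submodule.span_neg]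

section LineSubspaceAngle

variable {n : ℕ} {v ν : EuclideanSpace ℝ (Fin n)}

lemma lineSubspaceAngle_span_singleton (hν : ν ≠ 0) :
    lineSubspaceAngle v (Submodule.span ℝ {ν}) = min (angle v ν) (angle v (-ν)) := by
  have hset : {θ : ℝ | ∃ w ∈ Submodule.span ℝ {ν}, w ≠ 0 ∧ θ = angle v w}
      = {angle v ν, angle v (-ν)} := by
    ext θ
    constructor
    · rintro ⟨w, hw, hw0, rfl⟩
      obtain ⟨c, rfl⟩ := Submodule.mem_span_singleton.1 hw
      rcases (left_ne_zero_of_smul hw0).lt_or_gt with hc | hc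
      · simp [angle_smul_right_of_neg _ _ hc]
      · simp [angle_smul_right_of_pos _ _ hc]
    · rintro (rfl | rfl)
      · exact ⟨ν, Submodule.mem_span_singleton_self ν, hν, rfl⟩
      · exact ⟨-ν, Submodule.neg_mem _ (Submodule.mem_span_singleton_self ν),
          neg_ne_zero.2 hν, rfl⟩
  rw [lineSubspaceAngle, hset, csInf_pair]

lemma lineSubspaceAngle_span_singleton_of_inner_nonneg (hν : ν ≠ 0) (h : 0 ≤ inner ℝ v ν) :
    lineSubspaceAngle v (Submodule.span ℝ {ν}) = angle v ν := by
  have hacute : angle v ν ≤ π / 2 := arccos_le_pi_div_two.2 (div_nonneg h (by positivity))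
  rw [lineSubspaceAngle_span_singleton hν, angle_neg_right]
  exact min_eq_left (by linarith)

lemma angle_neg_le_lineSubspaceAngle_add {u w : EuclideanSpace ℝ (Fin n)}
    (h : inner ℝ w ν * inner ℝ u ν < 0) :
    angle (-u) w ≤ lineSubspaceAngle u (Submodule.span ℝ {ν})
      + lineSubspaceAngle w (Submodule.span ℝ {ν}) := by
  wlog hw : 0 < inner ℝ w ν generalizing ν
  · have hw0 : inner ℝ w ν ≠ 0 := by rintro h0; simp [h0] at h
    have hw' : 0 < inner ℝ w (-ν) := by
      rw [inner_neg_right]; exact neg_pos.2 ((not_lt.1 hw).lt_of_ne hw0)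
    simpa only [span_singleton_neg] using
      this (by simpa only [inner_neg_right, neg_mul_neg] using h) hw'
  have hν : ν ≠ 0 := by rintro rfl; simp at hw
  have hu : 0 ≤ inner ℝ u (-ν) := by rw [inner_neg_right]; nlinarith
  calc angle (-u) w ≤ angle (-u) ν + angle ν w := angle_le_angle_add_angle _ _ _
    _ = lineSubspaceAngle u (Submodule.span ℝ {-ν})
        + lineSubspaceAngle w (Submodule.span ℝ {ν}) := by
      rw [lineSubspaceAngle_span_singleton_of_inner_nonneg (neg_ne_zero.2 hν) hu,
        lineSubspaceAngle_span_singleton_of_inner_nonneg hν hw.le, angle_comm ν w,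
        angle_neg_left, angle_neg_right]
    _ = _ := by rw [span_singleton_neg]

end LineSubspaceAngle

theorem alternating_horizontal_length_bound_general {n : ℕ}
    (N : EuclideanSpace ℝ (Fin n) → ℝ)
    (ε₁ : ℝ)
    (hcontr : ∀ P Q R : EuclideanSpace ℝ (Fin n),
      N (R - Q) ≤ N (R - P) → EuclideanGeometry.angle P Q R ≤ 2 * ε₁ →
      ‖Q - R‖ ≤ 3 / 4 * ‖P - Q‖)
    (r : ℕ) (A : ℕ → EuclideanSpace ℝ (Fin n))
    (hsc : ∀ i j k : ℕ, i ≤ j → j ≤ k → k ≤ r →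
      N (A k - A j) ≤ N (A k - A i))
    (ν : EuclideanSpace ℝ (Fin n))
    (halt : ∀ k : ℕ, k + 1 < r →
      (inner ℝ (A (k + 2) - A (k + 1)) ν : ℝ) * (inner ℝ (A (k + 1) - A k) ν : ℝ) < 0)
    (hhor : ∀ k : ℕ, k < r →
      lineSubspaceAngle (A (k + 1) - A k) (Submodule.span ℝ {ν}) ≤ ε₁) :
    ∑ k ∈ Finset.range r, ‖A (k + 1) - A k‖ ≤ 4 * ‖A 0 - A 1‖ := by
  have hstep : ∀ k, k + 1 < r → ‖A (k + 2) - A (k + 1)‖ ≤ 3 / 4 * ‖A (k + 1) - A k‖ := by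
    intro k hk
    have hangle : EuclideanGeometry.angle (A k) (A (k + 1)) (A (k + 2)) ≤ 2 * ε₁ := by
      rw [EuclideanGeometry.angle, vsub_eq_sub, vsub_eq_sub, ← neg_sub]
      linarith [angle_neg_le_lineSubspaceAngle_add (halt k hk), hhor k (by omega),
        hhor (k + 1) hk]
    have hself : N (A (k + 2) - A (k + 1)) ≤ N (A (k + 2) - A k) :=
      hsc k (k + 1) (k + 2) (by omega) (by omega) hk
    simpa only [norm_sub_rev] using hcontr _ _ _ hself hangle
  calc ∑ k ∈ Finset.range r, ‖A (k + 1) - A k‖ ≤ ‖A (0 + 1) - A 0‖ / (1 - 3 / 4) :=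
        sum_range_le_div_one_sub_of_succ_le_mul (a := fun k ↦ ‖A (k + 1) - A k‖)
          (by norm_num) (by norm_num) (norm_nonneg _) hstep
    _ = 4 * ‖A 0 - A 1‖ := by rw [zero_add, norm_sub_rev]; ring

/-- A self-contracted polygonal line with alternating directions along an axis
`span{ν}`, all of whose segments are `ε₁`-horizontal with respect to that axis
(where `ε₁` satisfies the small-angle contraction property), has total Euclidean
length at most `4·|A₀ - A₁|`. -/
theorem alternating_horizontal_length_bound {n : ℕ}
    (N : EuclideanSpace ℝ (Fin n) → ℝ)
    (hN0 : ∀ x, N x = 0 ↔ x = 0)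
    (hNsmul : ∀ (c : ℝ) x, N (c • x) = |c| * N x)
    (hNadd : ∀ x y, N (x + y) ≤ N x + N y)
    (ε₁ : ℝ) (hε₁ : 0 < ε₁)
    (hcontr : ∀ P Q R : EuclideanSpace ℝ (Fin n),
      N (R - Q) ≤ N (R - P) → EuclideanGeometry.angle P Q R ≤ 2 * ε₁ →
      ‖Q - R‖ ≤ 3 / 4 * ‖P - Q‖)
    (r : ℕ) (hr : 1 ≤ r) (A : ℕ → EuclideanSpace ℝ (Fin n))
    (hsc : ∀ i j k : ℕ, i ≤ j → j ≤ k → k ≤ r →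
      N (A k - A j) ≤ N (A k - A i))
    (ν : EuclideanSpace ℝ (Fin n)) (hν : ‖ν‖ = 1)
    (halt : ∀ k : ℕ, k + 1 < r →
      (inner ℝ (A (k + 2) - A (k + 1)) ν : ℝ) * (inner ℝ (A (k + 1) - A k) ν : ℝ) < 0)
    (hhor : ∀ k : ℕ, k < r →
      lineSubspaceAngle (A (k + 1) - A k) (Submodule.span ℝ {ν}) ≤ ε₁) :
    ∑ k ∈ Finset.range r, ‖A (k + 1) - A k‖ ≤ 4 * ‖A 0 - A 1‖ :=
  alternating_horizontal_length_bound_general N ε₁ hcontr r A hsc ν halt hhor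
end

section
/- The curve θ: [0, ∞) → ℓ² defined by θ(t) = 0 for t ∈ [0,1) and θ(t) = Σ_{j=1}^{k-1} (1/j)·e_j for t ∈ [k-1, k), k ≥ 2 (where e_j is the standard orthonormal basis), is self-contracted, its image is contained in a bounded set, but its length ℓ(θ) is infinite. -/
/-!
On `t ≥ 0` the curve is `t ↦ S ⌊t⌋₊`, where `S k = ∑_{1 ≤ j ≤ k} c_j v_j` for the orthonormal
family `v_j = e_j` and `c_j = 1/j`. By Pythagoras `‖S k - S l‖² = ∑_{l < j ≤ k} c_j²` for `l ≤ k`: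
this shrinks as `l` grows (self-contractedness) and is at most `∑ c_j² = ∑ 1/j² < ∞` when `l = 0`
(boundedness), while the jump from `S k` to `S (k + 1)` has length `1/(k+1)`, so the length
dominates the harmonic series.
-/

open Finset

theorem lp.orthonormal_single {ι 𝕜 : Type*} [RCLike 𝕜] [DecidableEq ι] :
    Orthonormal 𝕜 (fun i : ι => lp.single 2 i (1 : 𝕜)) := by
  rw [orthonormal_iff_ite]
  intro i j
  rw [lp.inner_single_left, lp.single_apply]
  split_ifs <;> simp_all

theorem Orthonormal.norm_sum_smul_sq {ι E : Type*} [NormedAddCommGroup E] [InnerProductSpace ℝ E]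
    {v : ι → E} (hv : Orthonormal ℝ v) (s : Finset ι) (c : ι → ℝ) :
    ‖∑ j ∈ s, c j • v j‖ ^ 2 = ∑ j ∈ s, c j ^ 2 := by
  rw [← real_inner_self_eq_norm_sq, hv.inner_sum c c s]
  simp only [RCLike.conj_to_real, sq]

def staircase {M : Type*} [AddCommMonoid M] [Module ℝ M] (c : ℕ → ℝ) (v : ℕ → M) (k : ℕ) : M :=
  ∑ j ∈ Icc 1 k, c j • v j

theorem staircase_sub_staircase {M : Type*} [AddCommGroup M] [Module ℝ M] (c : ℕ → ℝ) (v : ℕ → M)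
    {l k : ℕ} (h : l ≤ k) :
    staircase c v k - staircase c v l = ∑ j ∈ Ioc l k, c j • v j := by
  have hIcc (n : ℕ) : Icc 1 n = Ioc 0 n := Icc_add_one_left_eq_Ioc 0 n
  rw [sub_eq_iff_eq_add', staircase, staircase, hIcc, hIcc,
    sum_Ioc_consecutive _ (Nat.zero_le l) h]

section Orthonormal

variable {E : Type*} [NormedAddCommGroup E] [InnerProductSpace ℝ E] {v : ℕ → E}
  (hv : Orthonormal ℝ v) (c : ℕ → ℝ)
include hv

theorem Orthonormal.dist_staircase_sq {l k : ℕ} (h : l ≤ k) :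
    dist (staircase c v k) (staircase c v l) ^ 2 = ∑ j ∈ Ioc l k, c j ^ 2 := by
  rw [dist_eq_norm, staircase_sub_staircase c v h, hv.norm_sum_smul_sq]

theorem Orthonormal.dist_staircase_antitone {l₁ l₂ k : ℕ} (h₁ : l₁ ≤ l₂) (h₂ : l₂ ≤ k) :
    dist (staircase c v k) (staircase c v l₂) ≤ dist (staircase c v k) (staircase c v l₁) := by
  rw [← pow_le_pow_iff_left₀ dist_nonneg dist_nonneg two_ne_zero,
    hv.dist_staircase_sq c h₂, hv.dist_staircase_sq c (h₁.trans h₂)]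
  exact sum_le_sum_of_subset_of_nonneg (Ioc_subset_Ioc_left h₁) fun j _ _ => sq_nonneg _

theorem Orthonormal.dist_staircase_succ (k : ℕ) :
    dist (staircase c v (k + 1)) (staircase c v k) = |c (k + 1)| := by
  rw [← Real.sqrt_sq dist_nonneg, hv.dist_staircase_sq c k.le_succ, Nat.Ioc_succ_singleton,
    sum_singleton, Real.sqrt_sq_eq_abs]

theorem Orthonormal.norm_staircase_le (hc : Summable fun j => c j ^ 2) (k : ℕ) :
    ‖staircase c v k‖ ≤ √(∑' j, c j ^ 2) := by
  rw [← abs_norm]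
  refine Real.abs_le_sqrt ?_
  rw [staircase, hv.norm_sum_smul_sq]
  exact hc.sum_le_tsum _ fun j _ => sq_nonneg _

end Orthonormal

/-- The staircase curve in `ℓ²` given by `θ(t) = Σ_{j=1}^{k} (1/j)·e_j` for
`t ∈ [k, k+1)` is self-contracted on `[0, ∞)`, has bounded image, but has
infinite length. -/
theorem ell2_staircase_infinite_length
    (θ : ℝ → lp (fun _ : ℕ => ℝ) 2)
    (hθ : ∀ k : ℕ, ∀ t : ℝ, (k : ℝ) ≤ t → t < (k : ℝ) + 1 →
      θ t = ∑ j ∈ Finset.Icc 1 k, ((j : ℝ)⁻¹) • lp.single 2 j (1 : ℝ)) :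
    (∀ t₁ t₂ t₃ : ℝ, 0 ≤ t₁ → t₁ ≤ t₂ → t₂ ≤ t₃ →
      dist (θ t₃) (θ t₂) ≤ dist (θ t₃) (θ t₁)) ∧
    Bornology.IsBounded (θ '' Set.Ici 0) ∧
    (∀ M : ℝ, ∃ (m : ℕ) (t : ℕ → ℝ), (∀ j, 0 ≤ t j) ∧ Monotone t ∧
      M ≤ ∑ j ∈ Finset.range m, dist (θ (t j)) (θ (t (j + 1)))) := by
  have hv : Orthonormal ℝ fun j : ℕ => lp.single 2 j (1 : ℝ) := lp.orthonormal_single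
  set S := staircase (fun j : ℕ => (j : ℝ)⁻¹) fun j : ℕ => lp.single 2 j (1 : ℝ)
  have hθS (t : ℝ) (ht : 0 ≤ t) : θ t = S ⌊t⌋₊ :=
    hθ _ t (Nat.floor_le ht) (Nat.lt_floor_add_one t)
  have hθn (n : ℕ) : θ n = S n := by rw [hθS _ n.cast_nonneg, Nat.floor_natCast]
  refine ⟨fun t₁ t₂ t₃ h₀ h₁₂ h₂₃ => ?_, ?_, fun M => ?_⟩
  · rw [hθS t₁ h₀, hθS t₂ (h₀.trans h₁₂), hθS t₃ (h₀.trans (h₁₂.trans h₂₃))]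
    exact hv.dist_staircase_antitone _ (Nat.floor_mono h₁₂) (Nat.floor_mono h₂₃)
  · have hc : Summable fun j : ℕ => ((j : ℝ)⁻¹) ^ 2 := by
      simpa only [inv_pow] using Real.summable_nat_pow_inv.mpr one_lt_two
    refine isBounded_iff_forall_norm_le.mpr ⟨√(∑' j : ℕ, ((j : ℝ)⁻¹) ^ 2), ?_⟩
    rintro _ ⟨t, ht, rfl⟩
    rw [hθS t ht]
    exact hv.norm_staircase_le _ hc _
  · obtain ⟨m, hm⟩ :=
      (Real.tendsto_sum_range_one_div_nat_succ_atTop.eventually_ge_atTop M).exists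
    refine ⟨m, Nat.cast, Nat.cast_nonneg, Nat.mono_cast, hm.trans_eq (sum_congr rfl fun j _ => ?_)⟩
    rw [hθn, hθn, dist_comm, hv.dist_staircase_succ, abs_inv, Nat.abs_cast, one_div, Nat.cast_succ]
end

section
/- The curve θ: [0,1] → L²(0,1) defined by θ(t) = 𝟙_{[0,t]} (the indicator function of [0,t]) satisfies ‖θ(t) - θ(s)‖_{L²} = |t - s|^{1/2} for all s, t ∈ [0,1]; consequently θ is a continuous self-contracted curve whose image is compact but which has infinite length. -/
/-!
In `L²` the distance between the indicators of two nested sets is the square root of the measure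
of their difference, so `‖𝟙_{[0,t]} - 𝟙_{[0,s]}‖ = √|t - s|`. Everything else is a property of any
curve with `d(θ s, θ t) = √|t - s|`: it is continuous, so `θ([0,1])` is compact; it is
self-contracted because `√` is monotone; and the `m` steps of the uniform partition of `[0,1]`
each contribute `√(1/m)`, for a total of `√m`.
-/

open MeasureTheory Set Filter Topology Finset

theorem Set.Icc_sdiff_Icc_of_le {α : Type*} [LinearOrder α] {a b c : α} (hab : a ≤ b) :
    Icc a c \ Icc a b = Ioc b c := by
  ext x
  simp only [Set.mem_sdiff, Set.mem_Icc, Set.mem_Ioc, not_and, not_le]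
  constructor
  · rintro ⟨⟨hax, hxc⟩, hx⟩
    exact ⟨hx hax, hxc⟩
  · rintro ⟨hbx, hxc⟩
    exact ⟨⟨hab.trans hbx.le, hxc⟩, fun _ => hbx⟩

theorem Real.volume_restrict_Ioo_Ioc {a b s t : ℝ} (has : a ≤ s) (htb : t ≤ b) :
    volume.restrict (Ioo a b) (Ioc s t) = ENNReal.ofReal (t - s) := by
  rw [Measure.restrict_congr_set Ioo_ae_eq_Icc, Measure.restrict_apply measurableSet_Ioc,
    inter_eq_left.2 (Ioc_subset_Icc_self.trans (Icc_subset_Icc has htb)), Real.volume_Ioc]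

theorem MeasureTheory.Lp.dist_eq_sqrt_measure_sdiff {α : Type*} [MeasurableSpace α]
    {μ : Measure α} {f g : Lp ℝ 2 μ} {s t : Set α} (hst : s ⊆ t) (hs : MeasurableSet s)
    (ht : MeasurableSet t) (hf : f =ᵐ[μ] s.indicator fun _ => 1)
    (hg : g =ᵐ[μ] t.indicator fun _ => 1) :
    dist f g = √(μ (t \ s)).toReal := by
  have hsub : ⇑g - ⇑f =ᵐ[μ] (t \ s).indicator fun _ => 1 := by
    filter_upwards [hf, hg] with x hfx hgx
    rw [Pi.sub_apply, hfx, hgx, indicator_sdiff hst]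
    rfl
  rw [dist_comm, Lp.dist_def, eLpNorm_congr_ae hsub,
    eLpNorm_indicator_const (ht.diff hs) two_ne_zero ENNReal.ofNat_ne_top]
  simp [ENNReal.toReal_rpow, Real.sqrt_eq_rpow]

-- Clamped to `[0,1]`, so that every index `j`, and also `m = 0`, gives a point of `[0,1]`.
noncomputable def uniformPartition (m j : ℕ) : ℝ := min (j / m) 1

theorem uniformPartition_mem_Icc (m j : ℕ) : uniformPartition m j ∈ Icc (0 : ℝ) 1 :=
  ⟨le_min (by positivity) zero_le_one, min_le_right _ _⟩

theorem monotone_uniformPartition (m : ℕ) : Monotone (uniformPartition m) :=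
  fun _ _ hij => min_le_min_right 1 (by gcongr)

section SqrtSnowflake

variable {E : Type*} [PseudoMetricSpace E]

def IsSqrtSnowflakeOn (θ : ℝ → E) (s : Set ℝ) : Prop :=
  ∀ x ∈ s, ∀ y ∈ s, dist (θ x) (θ y) = √|y - x|

theorem isSqrtSnowflakeOn_of_le {θ : ℝ → E} {s : Set ℝ}
    (h : ∀ x ∈ s, ∀ y ∈ s, x ≤ y → dist (θ x) (θ y) = √(y - x)) : IsSqrtSnowflakeOn θ s := by
  intro x hx y hy
  rcases le_total x y with hxy | hyx
  · rw [h x hx y hy hxy, abs_of_nonneg (sub_nonneg.2 hxy)]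
  · rw [dist_comm, h y hy x hx hyx, abs_sub_comm, abs_of_nonneg (sub_nonneg.2 hyx)]

namespace IsSqrtSnowflakeOn

variable {θ : ℝ → E} {s : Set ℝ}

theorem dist_eq_sqrt_sub (h : IsSqrtSnowflakeOn θ s) {x y : ℝ} (hx : x ∈ s) (hy : y ∈ s)
    (hxy : x ≤ y) : dist (θ x) (θ y) = √(y - x) := by
  rw [h x hx y hy, abs_of_nonneg (sub_nonneg.2 hxy)]

theorem continuousOn (h : IsSqrtSnowflakeOn θ s) : ContinuousOn θ s := by
  intro x hx
  rw [ContinuousWithinAt, tendsto_iff_dist_tendsto_zero]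
  have hsqrt : Tendsto (fun y => √|x - y|) (𝓝[s] x) (𝓝 0) := by
    have hcont : Continuous fun y : ℝ => √|x - y| := by fun_prop
    simpa using (hcont.tendsto x).mono_left nhdsWithin_le_nhds
  exact hsqrt.congr' (eventually_nhdsWithin_of_forall fun y hy => (h y hy x hx).symm)

theorem dist_le_dist_of_le_of_le (h : IsSqrtSnowflakeOn θ s) {t₁ t₂ t₃ : ℝ} (h₁ : t₁ ∈ s)
    (h₂ : t₂ ∈ s) (h₃ : t₃ ∈ s) (h₁₂ : t₁ ≤ t₂) (h₂₃ : t₂ ≤ t₃) :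
    dist (θ t₃) (θ t₂) ≤ dist (θ t₃) (θ t₁) := by
  rw [dist_comm, h.dist_eq_sqrt_sub h₂ h₃ h₂₃, dist_comm, h.dist_eq_sqrt_sub h₁ h₃ (h₁₂.trans h₂₃)]
  exact Real.sqrt_le_sqrt (by linarith)

theorem sum_dist_uniformPartition (h : IsSqrtSnowflakeOn θ (Icc 0 1)) (m : ℕ) :
    ∑ j ∈ range m, dist (θ (uniformPartition m j)) (θ (uniformPartition m (j + 1))) = √m := by
  have hterm : ∀ j ∈ range m,
      dist (θ (uniformPartition m j)) (θ (uniformPartition m (j + 1))) = √(1 / m) := by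
    intro j hj
    have hjm : j + 1 ≤ m := mem_range.1 hj
    have hm : (0 : ℝ) < m := by exact_mod_cast (Nat.succ_pos j).trans_le hjm
    have hle : ((j : ℕ) : ℝ) / m ≤ ((j + 1 : ℕ) : ℝ) / m := by gcongr; exact Nat.le_succ j
    have hle_one : ((j + 1 : ℕ) : ℝ) / m ≤ 1 := by rw [div_le_one hm]; exact_mod_cast hjm
    rw [uniformPartition, uniformPartition, min_eq_left (hle.trans hle_one), min_eq_left hle_one,
      h.dist_eq_sqrt_sub ⟨by positivity, hle.trans hle_one⟩ ⟨by positivity, hle_one⟩ hle]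
    congr 1
    push_cast
    ring
  rw [sum_congr rfl hterm, sum_const, card_range, nsmul_eq_mul, one_div, Real.sqrt_inv,
    ← div_eq_mul_inv, Real.div_sqrt]

theorem exists_sum_dist_ge (h : IsSqrtSnowflakeOn θ (Icc 0 1)) (M : ℝ) :
    ∃ (m : ℕ) (t : ℕ → ℝ), (∀ j, t j ∈ Icc (0 : ℝ) 1) ∧ Monotone t ∧
      M ≤ ∑ j ∈ range m, dist (θ (t j)) (θ (t (j + 1))) := by
  refine ⟨⌈M ^ 2⌉₊, uniformPartition ⌈M ^ 2⌉₊,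
    uniformPartition_mem_Icc _, monotone_uniformPartition _, ?_⟩
  rw [h.sum_dist_uniformPartition]
  calc M ≤ |M| := le_abs_self M
    _ = √(M ^ 2) := (Real.sqrt_sq_eq_abs M).symm
    _ ≤ √⌈M ^ 2⌉₊ := Real.sqrt_le_sqrt (Nat.le_ceil _)

end IsSqrtSnowflakeOn

end SqrtSnowflake

/-- The curve `θ(t) = 𝟙_{[0,t]}` in `L²` of `(0,1)` satisfies
`dist (θ s) (θ t) = |t - s|^{1/2}`; consequently it is a continuous
self-contracted curve with compact image but infinite length. -/
theorem L2_snowflake_infinite_length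
    (μ : Measure ℝ) (hμ : μ = volume.restrict (Set.Ioo (0 : ℝ) 1))
    (θ : ℝ → Lp ℝ 2 μ)
    (hθ : ∀ t ∈ Set.Icc (0 : ℝ) 1,
      (θ t : ℝ → ℝ) =ᵐ[μ] (Set.Icc (0 : ℝ) t).indicator fun _ => (1 : ℝ)) :
    (∀ s ∈ Set.Icc (0 : ℝ) 1, ∀ t ∈ Set.Icc (0 : ℝ) 1,
      dist (θ s) (θ t) = Real.sqrt |t - s|) ∧
    ContinuousOn θ (Set.Icc 0 1) ∧
    (∀ t₁ ∈ Set.Icc (0 : ℝ) 1, ∀ t₂ ∈ Set.Icc (0 : ℝ) 1,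
      ∀ t₃ ∈ Set.Icc (0 : ℝ) 1, t₁ ≤ t₂ → t₂ ≤ t₃ →
      dist (θ t₃) (θ t₂) ≤ dist (θ t₃) (θ t₁)) ∧
    IsCompact (θ '' Set.Icc 0 1) ∧
    (∀ M : ℝ, ∃ (m : ℕ) (t : ℕ → ℝ), (∀ j, t j ∈ Set.Icc (0 : ℝ) 1) ∧
      Monotone t ∧ M ≤ ∑ j ∈ Finset.range m, dist (θ (t j)) (θ (t (j + 1)))) := by
  have hsnow : IsSqrtSnowflakeOn θ (Icc 0 1) := by
    refine isSqrtSnowflakeOn_of_le fun s hs t ht hst => ?_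
    rw [Lp.dist_eq_sqrt_measure_sdiff (Icc_subset_Icc_right hst) measurableSet_Icc
        measurableSet_Icc (hθ s hs) (hθ t ht), Icc_sdiff_Icc_of_le hs.1, hμ,
      Real.volume_restrict_Ioo_Ioc hs.1 ht.2, ENNReal.toReal_ofReal (sub_nonneg.2 hst)]
  have hcont : ContinuousOn θ (Icc 0 1) := hsnow.continuousOn
  exact ⟨hsnow, hcont,
    fun _ h₁ _ h₂ _ h₃ h₁₂ h₂₃ => hsnow.dist_le_dist_of_le_of_le h₁ h₂ h₃ h₁₂ h₂₃,
    isCompact_Icc.image_of_continuousOn hcont, hsnow.exists_sum_dist_ge⟩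
end
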